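/- For λ > 0, the function x ↦ D_{−λ}(x) = (1/Γ(λ)) e^{−x²/4} ∫₀^∞ t^{λ−1} e^{−xt − t²/2} dt is strictly decreasing on [0, ∞). -/

import Mathlib

/-!
Write `Dpc l x = Γ(l)⁻¹ · e^{-x²/4} · I(x)`. For `x ≥ 0` the integrand of `I(x)` is positive
and pointwise nonincreasing in `x`, and it is dominated by `t^{l-1} e^{-t²/2}`, which is
integrable for `l > 0`. Hence `I` is positive and antitone on `[0, ∞)`, while `e^{-x²/4}` is
positive and strictly antitone there, so the product is strictly antitone.
-/

noncomputable def Dpc (l x : ℝ) : ℝ :=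
  (1 / Real.Gamma l) * Real.exp (-x^2/4) *
    ∫ t in Set.Ioi (0:ℝ), t ^ (l - 1) * Real.exp (-x*t - t^2/2)

open MeasureTheory Real Set

theorem StrictAntiOn.mul_antitoneOn {α M₀ : Type*} [Preorder α] [MulZeroClass M₀] [Preorder M₀]
    [PosMulMono M₀] [MulPosStrictMono M₀] {f g : α → M₀} {s : Set α}
    (hf : StrictAntiOn f s) (hg : AntitoneOn g s)
    (hf₀ : ∀ x ∈ s, 0 ≤ f x) (hg₀ : ∀ x ∈ s, 0 < g x) : StrictAntiOn (f * g) s :=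
  fun _ ha _ hb hab ↦ mul_lt_mul (hf ha hb hab) (hg ha hb hab.le) (hg₀ _ hb) (hf₀ _ ha)

theorem setIntegral_pos_of_pos {X : Type*} [MeasurableSpace X] {μ : Measure X} {s : Set X}
    {f : X → ℝ} (hs : MeasurableSet s) (hμs : μ s ≠ 0) (hfi : IntegrableOn f s μ)
    (hf : ∀ x ∈ s, 0 < f x) : 0 < ∫ x in s, f x ∂μ := by
  rw [setIntegral_pos_iff_support_of_nonneg_ae
    (ae_restrict_of_forall_mem hs fun x hx ↦ (hf x hx).le) hfi]
  have hsupp : s ⊆ Function.support f := fun x hx ↦ (hf x hx).ne'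
  rwa [inter_eq_right.mpr hsupp, pos_iff_ne_zero]

theorem strictAntiOn_exp_neg_sq_div_four : StrictAntiOn (fun x : ℝ ↦ exp (-x ^ 2 / 4)) (Ici 0) :=
  fun x hx y _ hxy ↦ exp_lt_exp.mpr (by simp only [mem_Ici] at hx; nlinarith)

section Integral

variable {l x : ℝ}

theorem integrableOn_rpow_mul_exp_neg_mul_sub_sq_div_two (hl : 0 < l) (hx : 0 ≤ x) :
    IntegrableOn (fun t : ℝ ↦ t ^ (l - 1) * exp (-x * t - t ^ 2 / 2)) (Ioi 0) := by
  refine (integrableOn_rpow_mul_exp_neg_mul_sq (b := 1 / 2) (s := l - 1)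
    (by norm_num) (by linarith)).mono'
    (by fun_prop) (ae_restrict_of_forall_mem measurableSet_Ioi fun t (ht : 0 < t) ↦ ?_)
  rw [norm_of_nonneg (by positivity)]
  exact mul_le_mul_of_nonneg_left (exp_le_exp.mpr (by nlinarith [mul_nonneg hx ht.le]))
    (by positivity)

theorem integral_rpow_mul_exp_neg_mul_sub_sq_div_two_pos (hl : 0 < l) (hx : 0 ≤ x) :
    0 < ∫ t in Ioi (0 : ℝ), t ^ (l - 1) * exp (-x * t - t ^ 2 / 2) :=
  setIntegral_pos_of_pos measurableSet_Ioi (by simp)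
    (integrableOn_rpow_mul_exp_neg_mul_sub_sq_div_two hl hx) fun t (ht : 0 < t) ↦ by positivity

theorem antitoneOn_integral_rpow_mul_exp_neg_mul_sub_sq_div_two (hl : 0 < l) :
    AntitoneOn (fun x : ℝ ↦ ∫ t in Ioi (0 : ℝ), t ^ (l - 1) * exp (-x * t - t ^ 2 / 2))
      (Ici 0) := by
  intro x (hx : 0 ≤ x) y (hy : 0 ≤ y) hxy
  refine setIntegral_mono_on (integrableOn_rpow_mul_exp_neg_mul_sub_sq_div_two hl hy)
    (integrableOn_rpow_mul_exp_neg_mul_sub_sq_div_two hl hx) measurableSet_Ioi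
    fun t (ht : 0 < t) ↦ ?_
  gcongr

end Integral

theorem Dpc_strictAnti (l : ℝ) (hl : 0 < l) :
    StrictAntiOn (Dpc l) (Set.Ici 0) := by
  have hΓ : 0 < 1 / Gamma l := one_div_pos.mpr (Gamma_pos_of_pos hl)
  have hexp : StrictAntiOn (fun x : ℝ ↦ 1 / Gamma l * exp (-x ^ 2 / 4)) (Ici 0) :=
    fun x hx y hy hxy ↦ mul_lt_mul_of_pos_left (strictAntiOn_exp_neg_sq_div_four hx hy hxy) hΓ
  exact hexp.mul_antitoneOn (antitoneOn_integral_rpow_mul_exp_neg_mul_sub_sq_div_two hl)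
    (fun x _ ↦ by positivity)
    (fun x hx ↦ integral_rpow_mul_exp_neg_mul_sub_sq_div_two_pos hl hx)
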